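/- For any graph G of order n, χ_{×2}(G) + χ_{×2}(Ḡ) ≥ (n+2)/2, where Ḡ is the complement of G. -/

import Mathlib

/-!
Every closed neighbourhood meets each part of a `2`-limited packing partition of `G` in at most
two vertices, so `deg_G v + 1 ≤ 2 χ_{×2}(G)`, and likewise `n - deg_G v ≤ 2 χ_{×2}(Ḡ)` because the
closed neighbourhoods of `v` in `G` and `Ḡ` cover `V` and overlap only in `v`. Adding gives
`n + 1 ≤ 2 (χ_{×2}(G) + χ_{×2}(Ḡ))`, which is the claim when `n` is even. When `n` is odd, the
handshake lemma provides a vertex of even degree, for which the first bound improves by one.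
-/

open SimpleGraph

/-- The closed neighborhood `N[v]` of a vertex. -/
def closedNbhd {V : Type*} (G : SimpleGraph V) (v : V) : Set V :=
  insert v (G.neighborSet v)

/-- `B` is a `k`-limited packing: every closed neighborhood contains at most `k` vertices of `B`. -/
def IsLimitedPacking {V : Type*} (G : SimpleGraph V) (k : ℕ) (B : Set V) : Prop :=
  ∀ v : V, (B ∩ closedNbhd G v).ncard ≤ k

/-- `P` is a partition of the vertex set of `G` into `k`-limited packing sets. -/
def IsLPPartition {V : Type*} (G : SimpleGraph V) (k : ℕ) (P : Finset (Set V)) : Prop :=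
  (∀ B ∈ P, IsLimitedPacking G k B) ∧ (∀ v : V, ∃! B : Set V, B ∈ P ∧ v ∈ B)

/-- The `k`-limited packing partition number `χ_{×k}(G)`: minimum number of parts in a
partition of the vertex set into `k`-limited packing sets. -/
noncomputable def chiLP {V : Type*} (G : SimpleGraph V) (k : ℕ) : ℕ :=
  sInf {n | ∃ P : Finset (Set V), IsLPPartition G k P ∧ P.card = n}

section

variable {V : Type*}

lemma isLPPartition_singletons [Fintype V] [DecidableEq V] (G : SimpleGraph V) {k : ℕ}
    (hk : 1 ≤ k) : IsLPPartition G k (Finset.univ.image fun v : V => ({v} : Set V)) := by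
  refine ⟨?_, fun v => ⟨{v}, by simp, ?_⟩⟩
  · simp only [Finset.mem_image, Finset.mem_univ, true_and, forall_exists_index,
      forall_apply_eq_imp_iff]
    intro v w
    calc ({v} ∩ closedNbhd G w).ncard ≤ ({v} : Set V).ncard :=
          Set.ncard_le_ncard Set.inter_subset_left (Set.finite_singleton v)
      _ ≤ k := by rwa [Set.ncard_singleton]
  · rintro B ⟨hB, hvB⟩
    obtain ⟨u, -, rfl⟩ := Finset.mem_image.mp hB
    rw [Set.mem_singleton_iff.mp hvB]

lemma exists_isLPPartition_card_eq_chiLP [Fintype V] (G : SimpleGraph V) {k : ℕ} (hk : 1 ≤ k) :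
    ∃ P : Finset (Set V), IsLPPartition G k P ∧ P.card = chiLP G k := by
  classical
  exact Nat.sInf_mem (s := {n | ∃ P : Finset (Set V), IsLPPartition G k P ∧ P.card = n})
    ⟨_, _, isLPPartition_singletons G hk, rfl⟩

lemma IsLPPartition.ncard_closedNbhd_le [Finite V] {G : SimpleGraph V} {k : ℕ}
    {P : Finset (Set V)} (hP : IsLPPartition G k P) (v : V) :
    (closedNbhd G v).ncard ≤ k * P.card := by
  have hcover : closedNbhd G v ⊆ ⋃ B ∈ P, B ∩ closedNbhd G v := fun x hx => by
    obtain ⟨B, ⟨hBP, hxB⟩, -⟩ := hP.2 x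
    exact Set.mem_biUnion hBP ⟨hxB, hx⟩
  calc (closedNbhd G v).ncard ≤ (⋃ B ∈ P, B ∩ closedNbhd G v).ncard :=
        Set.ncard_le_ncard hcover
    _ ≤ ∑ B ∈ P, (B ∩ closedNbhd G v).ncard := P.set_ncard_biUnion_le _
    _ ≤ ∑ _B ∈ P, k := Finset.sum_le_sum fun B hB => hP.1 B hB v
    _ = k * P.card := by rw [Finset.sum_const, smul_eq_mul, mul_comm]

lemma ncard_closedNbhd_le_mul_chiLP [Fintype V] (G : SimpleGraph V) {k : ℕ} (hk : 1 ≤ k)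
    (v : V) : (closedNbhd G v).ncard ≤ k * chiLP G k := by
  obtain ⟨P, hP, hPcard⟩ := exists_isLPPartition_card_eq_chiLP G hk
  exact hPcard ▸ hP.ncard_closedNbhd_le v

lemma ncard_closedNbhd_eq_degree_add_one (G : SimpleGraph V) (v : V)
    [Fintype (G.neighborSet v)] : (closedNbhd G v).ncard = G.degree v + 1 := by
  rw [closedNbhd, Set.ncard_insert_of_notMem G.notMem_neighborSet_self,
    Set.ncard_eq_toFinset_card']
  rfl

lemma ncard_closedNbhd_add_ncard_closedNbhd_compl [Fintype V] (G : SimpleGraph V) (v : V) :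
    (closedNbhd G v).ncard + (closedNbhd Gᶜ v).ncard = Fintype.card V + 1 := by
  have hunion : closedNbhd G v ∪ closedNbhd Gᶜ v = Set.univ := by
    ext w
    rcases eq_or_ne w v with rfl | hw
    · simp [closedNbhd]
    · simp [closedNbhd, compl_adj, hw, hw.symm, em]
  have hinter : closedNbhd G v ∩ closedNbhd Gᶜ v = {v} := by
    ext w
    rcases eq_or_ne w v with rfl | hw
    · simp [closedNbhd]
    · simp [closedNbhd, compl_adj, hw, hw.symm]
  rw [← Set.ncard_union_add_ncard_inter, hunion, hinter, Set.ncard_univ, Set.ncard_singleton,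
    Nat.card_eq_fintype_card]

lemma exists_even_degree_of_odd_card [Fintype V] (G : SimpleGraph V) [DecidableRel G.Adj]
    (hV : Odd (Fintype.card V)) : ∃ v, Even (G.degree v) := by
  by_contra! hodd
  have hall : Finset.univ.filter (fun v => Odd (G.degree v)) = Finset.univ :=
    Finset.filter_true_of_mem fun v _ => Nat.not_even_iff_odd.mp (hodd v)
  have := G.even_card_odd_degree_vertices
  rw [hall, Finset.card_univ] at this
  exact Nat.not_even_iff_odd.mpr hV this

end

/-- Nordhaus–Gaddum: for any graph `G` of order `n`,
`χ_{×2}(G) + χ_{×2}(Ġ) ≥ (n+2)/2`. -/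
theorem chiLP_two_nordhaus_gaddum {V : Type*} [Fintype V] [Nonempty V]
    (G : SimpleGraph V) :
    ((Fintype.card V : ℚ) + 2) / 2 ≤ chiLP G 2 + chiLP Gᶜ 2 := by
  classical
  suffices Fintype.card V + 2 ≤ 2 * chiLP G 2 + 2 * chiLP Gᶜ 2 by
    have : (Fintype.card V : ℚ) + 2 ≤ 2 * chiLP G 2 + 2 * chiLP Gᶜ 2 := by exact_mod_cast this
    linarith
  have hG := ncard_closedNbhd_le_mul_chiLP G one_le_two
  have hGc := ncard_closedNbhd_le_mul_chiLP Gᶜ one_le_two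
  have hsum := ncard_closedNbhd_add_ncard_closedNbhd_compl G
  rcases Nat.even_or_odd (Fintype.card V) with ⟨m, hm⟩ | hodd
  · obtain ⟨v⟩ := ‹Nonempty V›
    have := hG v; have := hGc v; have := hsum v
    omega
  · obtain ⟨v, m, hm⟩ := exists_even_degree_of_odd_card G hodd
    have := ncard_closedNbhd_eq_degree_add_one G v
    have := hG v; have := hGc v; have := hsum v
    omega
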